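/- Signature Gröbner basis criterion (signature Buchberger criterion): let T be a module monomial of R^m and B ⊂ R^m a finite set. If every regular S-pair spair(α,β) with α, β ∈ B and s(spair(α,β)) < T s-reduces to zero w.r.t. B, and every basis vector e_i with e_i < T s-reduces to zero w.r.t. B, then B is a signature Gröbner basis up to signature T. -/

import Mathlib

open MvPolynomial
open scoped MonomialOrder

namespace GB

variable {σ K : Type*} [Field K]

/-- The leading monomial (exponent vector) of `p` with respect to the monomial order `m`. -/
noncomputable def lm (m : MonomialOrder σ) (p : MvPolynomial σ K) : σ →₀ ℕ :=
  m.toSyn.symm (p.support.sup m.toSyn)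

/-- The leading coefficient of `p` with respect to `m`. -/
noncomputable def lc (m : MonomialOrder σ) (p : MvPolynomial σ K) : K :=
  p.coeff (lm m p)

/-- The leading term of `p` with respect to `m`. -/
noncomputable def lt (m : MonomialOrder σ) (p : MvPolynomial σ K) : MvPolynomial σ K :=
  monomial (lm m p) (lc m p)

/-- The (monic) least common multiple of two monomials, as pointwise sup of exponents. -/
noncomputable def mlcm (a b : σ →₀ ℕ) : σ →₀ ℕ := a ⊔ b

/-- The S-polynomial `S(f,g) = (λ/lt f)·f − (λ/lt g)·g` where `λ = lcm(lm f, lm g)`. -/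
noncomputable def sPoly (m : MonomialOrder σ) (f g : MvPolynomial σ K) : MvPolynomial σ K :=
  monomial (mlcm (lm m f) (lm m g) - lm m f) (lc m f)⁻¹ * f
    - monomial (mlcm (lm m f) (lm m g) - lm m g) (lc m g)⁻¹ * g

variable {n : ℕ}

/-- The map `π : R^n → R`, `α ↦ Σ αᵢ fᵢ`, determined by the input polynomials `F`. -/
noncomputable def piMap (F α : Fin n → MvPolynomial σ K) : MvPolynomial σ K :=
  ∑ i, α i * F i

/-- The `i`-th standard basis vector of `R^n`. -/
noncomputable def eV (i : Fin n) : Fin n → MvPolynomial σ K :=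
  fun k => if k = i then 1 else 0

/-- Scalar multiplication of a module element by the monomial with exponent `a` and
coefficient `c`. -/
noncomputable def mulV (a : σ →₀ ℕ) (c : K) (α : Fin n → MvPolynomial σ K) :
    Fin n → MvPolynomial σ K :=
  fun i => monomial a c * α i

/-- The S-pair `spair(α,β) = (λ/lt(πα))·α − (λ/lt(πβ))·β`, `λ = lcm(lm(πα), lm(πβ))`. -/
noncomputable def spair (m : MonomialOrder σ) (F α β : Fin n → MvPolynomial σ K) :
    Fin n → MvPolynomial σ K :=
  fun i =>
    monomial (mlcm (lm m (piMap F α)) (lm m (piMap F β)) - lm m (piMap F α))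
        (lc m (piMap F α))⁻¹ * α i
      - monomial (mlcm (lm m (piMap F α)) (lm m (piMap F β)) - lm m (piMap F β))
        (lc m (piMap F β))⁻¹ * β i

/-- A module monomial order on the module monomials `a·eᵢ` of `R^n` (encoded as pairs `(a,i)`),
compatible with the monomial order `m`: a well-founded linear order, compatible with monomial
multiplication, such that `a ≼[m] b` iff `a·eᵢ ≤ b·eᵢ` for all `i`. -/
structure ModOrder (σ : Type*) (n : ℕ) (m : MonomialOrder σ) where
  /-- the synonym type carrying the order -/
  syn : Type*
  /-- `syn` is linearly ordered -/
  lin : LinearOrder syn := by infer_instance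
  /-- identification of module monomials with `syn` -/
  toSyn : ((σ →₀ ℕ) × Fin n) ≃ syn
  /-- the order is a well-order -/
  wf : WellFounded fun x y : syn => x < y
  /-- compatibility with monomial multiplication -/
  smul_compat : ∀ (c : σ →₀ ℕ) (S T : (σ →₀ ℕ) × Fin n),
    toSyn S ≤ toSyn T → toSyn (c + S.1, S.2) ≤ toSyn (c + T.1, T.2)
  /-- compatibility with the monomial order `m` -/
  compat : ∀ (a b : σ →₀ ℕ) (i : Fin n), toSyn (a, i) ≤ toSyn (b, i) ↔ a ≼[m] b

attribute [instance] ModOrder.lin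

/-- The set of module terms (module monomials with nonzero coefficient) of `α ∈ R^n`. -/
noncomputable def msupport (α : Fin n → MvPolynomial σ K) : Finset ((σ →₀ ℕ) × Fin n) := by
  classical
  exact Finset.univ.biUnion fun i => (α i).support.image fun a => (a, i)

/-- The signature of `α`: its maximal module term w.r.t. `mo` (`⊥` for `α = 0`). -/
noncomputable def sig {m : MonomialOrder σ} (mo : ModOrder σ n m)
    (α : Fin n → MvPolynomial σ K) : WithBot mo.syn :=
  ((msupport α).image mo.toSyn).max

/-- `T` is the signature of `α` (as a module monomial). -/
def IsSigMon {m : MonomialOrder σ} (mo : ModOrder σ n m)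
    (α : Fin n → MvPolynomial σ K) (T : (σ →₀ ℕ) × Fin n) : Prop :=
  sig mo α = (mo.toSyn T : WithBot mo.syn)

/-- One 𝔰-reduction step of `α` by some `β ∈ B`: a monomial multiple `b·β` whose polynomial
lead term equals (and cancels) a term of `π α` and with `s(b·β) ≤ s(α)` is subtracted. -/
def SRedStep (m : MonomialOrder σ) (mo : ModOrder σ n m) (F : Fin n → MvPolynomial σ K)
    (B : Set (Fin n → MvPolynomial σ K)) (α α' : Fin n → MvPolynomial σ K) : Prop :=
  ∃ β ∈ B, ∃ (a : σ →₀ ℕ) (c : K), c ≠ 0 ∧ piMap F β ≠ 0 ∧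
    (a + lm m (piMap F β)) ∈ (piMap F α).support ∧
    c * lc m (piMap F β) = (piMap F α).coeff (a + lm m (piMap F β)) ∧
    sig mo (mulV a c β) ≤ sig mo α ∧
    α' = fun i => α i - monomial a c * β i

/-- A regular 𝔰-reduction step: as `SRedStep`, but with `s(b·β) < s(α)`. -/
def RegSRedStep (m : MonomialOrder σ) (mo : ModOrder σ n m) (F : Fin n → MvPolynomial σ K)
    (B : Set (Fin n → MvPolynomial σ K)) (α α' : Fin n → MvPolynomial σ K) : Prop :=
  ∃ β ∈ B, ∃ (a : σ →₀ ℕ) (c : K), c ≠ 0 ∧ piMap F β ≠ 0 ∧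
    (a + lm m (piMap F β)) ∈ (piMap F α).support ∧
    c * lc m (piMap F β) = (piMap F α).coeff (a + lm m (piMap F β)) ∧
    sig mo (mulV a c β) < sig mo α ∧
    α' = fun i => α i - monomial a c * β i

/-- `α` 𝔰-reduces to zero w.r.t. `B`: a chain of 𝔰-reduction steps reaches a syzygy. -/
def SRedToZero (m : MonomialOrder σ) (mo : ModOrder σ n m) (F : Fin n → MvPolynomial σ K)
    (B : Set (Fin n → MvPolynomial σ K)) (α : Fin n → MvPolynomial σ K) : Prop :=
  ∃ γ, Relation.ReflTransGen (SRedStep m mo F B) α γ ∧ piMap F γ = 0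

/-- `α` regular 𝔰-reduces to zero w.r.t. `B`: a chain of regular 𝔰-reduction steps reaches
a syzygy. -/
def RegSRedToZero (m : MonomialOrder σ) (mo : ModOrder σ n m) (F : Fin n → MvPolynomial σ K)
    (B : Set (Fin n → MvPolynomial σ K)) (α : Fin n → MvPolynomial σ K) : Prop :=
  ∃ γ, Relation.ReflTransGen (RegSRedStep m mo F B) α γ ∧ piMap F γ = 0

/-- `B` is a signature Gröbner basis up to signature `T`: every `γ` with `s(γ) < T`
𝔰-reduces to zero w.r.t. `B`. -/
def SigGBUpTo (m : MonomialOrder σ) (mo : ModOrder σ n m) (F : Fin n → MvPolynomial σ K)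
    (B : Set (Fin n → MvPolynomial σ K)) (T : WithBot mo.syn) : Prop :=
  ∀ γ : Fin n → MvPolynomial σ K, sig mo γ < T → SRedToZero m mo F B γ

/-!
Induct on `(s(γ), lm(π γ))`, lexicographically. Splitting off the leading module term
`c x^a eᵢ` of `γ` leaves a vector of smaller signature, and `eᵢ` 𝔰-reduces to zero by
hypothesis; unwinding both reductions represents `π γ = Σ c x^a π(β)` with `β ∈ B` and all
`s(c x^a β) ≤ s(γ)`. Order the terms by (degree, signature) and take a representation minimising
the largest key and its multiplicity. Two terms of top degree can always be merged: if their
signatures agree, a scalar multiple of one cancels the signature of the other and the difference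
is represented by induction; otherwise their difference is a multiple of a regular S-pair below
`T`, which 𝔰-reduces to zero. So the top degree is attained by one term, which top 𝔰-reduces
`γ`; that reduction step does not raise the signature and lowers `lm(π γ)`.
-/

instance {m : MonomialOrder σ} (mo : ModOrder σ n m) : WellFoundedLT mo.syn := ⟨mo.wf⟩

section LeadingTerms

variable {m : MonomialOrder σ} {p q : MvPolynomial σ K} {a x : σ →₀ ℕ} {c : K}

theorem lm_mem_support (hp : p ≠ 0) : lm m p ∈ p.support := m.degree_mem_support hp

theorem lc_ne_zero (hp : p ≠ 0) : lc m p ≠ 0 := m.leadingCoeff_ne_zero_iff.mpr hp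

theorem toSyn_le_toSyn_lm (hx : x ∈ p.support) : m.toSyn x ≤ m.toSyn (lm m p) := m.le_degree hx

theorem lm_eq_of_forall_le (hx : p.coeff x ≠ 0)
    (h : ∀ y ∈ p.support, m.toSyn y ≤ m.toSyn x) : lm m p = x :=
  m.toSyn.injective <| le_antisymm (m.degree_le_iff.mpr h) (m.le_degree (mem_support_iff.mpr hx))

theorem toSyn_le_of_mem_support_monomial_mul (hx : x ∈ (monomial a c * p).support) :
    m.toSyn x ≤ m.toSyn (a + lm m p) := by
  refine (m.le_degree hx).trans (m.degree_mul_le.trans ?_)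
  rw [map_add, map_add]
  exact add_le_add_left (m.degree_monomial_le c) _

theorem coeff_monomial_mul_lm : (monomial a c * p).coeff (a + lm m p) = c * lc m p :=
  coeff_monomial_mul _ _ _ _

theorem toSyn_lt_of_mem_support_sub (hp : ∀ y ∈ p.support, m.toSyn y ≤ m.toSyn a)
    (hq : ∀ y ∈ q.support, m.toSyn y ≤ m.toSyn a) (ha : p.coeff a = q.coeff a)
    (hx : x ∈ (p - q).support) : m.toSyn x < m.toSyn a := by
  classical
  refine lt_of_le_of_ne ?_ fun h => ?_
  · rcases Finset.mem_union.mp (support_sub σ p q hx) with hx | hx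
    exacts [hp x hx, hq x hx]
  · rw [m.toSyn.injective h, mem_support_iff, coeff_sub, ha, sub_self] at hx
    exact hx rfl

end LeadingTerms

section PiMap

variable {F α β : Fin n → MvPolynomial σ K}

theorem piMap_sub : piMap F (α - β) = piMap F α - piMap F β := by
  simp [piMap, sub_mul, Finset.sum_sub_distrib]

theorem piMap_add : piMap F (α + β) = piMap F α + piMap F β := by
  simp [piMap, add_mul, Finset.sum_add_distrib]

theorem piMap_mulV (a : σ →₀ ℕ) (c : K) :
    piMap F (mulV a c α) = monomial a c * piMap F α := by
  simp [piMap, mulV, Finset.mul_sum, mul_assoc]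

theorem ne_zero_of_piMap_ne_zero (h : piMap F α ≠ 0) : α ≠ 0 := by
  rintro rfl
  simp [piMap] at h

theorem mulV_mulV (b a : σ →₀ ℕ) (d c : K) :
    mulV b d (mulV a c α) = mulV (b + a) (d * c) α := by
  funext i
  simp [mulV, ← mul_assoc, monomial_mul]

end PiMap

namespace ModOrder

variable {m : MonomialOrder σ} (mo : ModOrder σ n m)

/-- Multiplication of module monomials by `x^b`, transported to `mo.syn`. -/
noncomputable def shift (b : σ →₀ ℕ) (x : mo.syn) : mo.syn :=
  mo.toSyn (b + (mo.toSyn.symm x).1, (mo.toSyn.symm x).2)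

@[simp]
theorem shift_toSyn (b : σ →₀ ℕ) (P : (σ →₀ ℕ) × Fin n) :
    mo.shift b (mo.toSyn P) = mo.toSyn (b + P.1, P.2) := by
  simp [shift]

theorem shift_strictMono (b : σ →₀ ℕ) : StrictMono (mo.shift b) := by
  refine Monotone.strictMono_of_injective (fun x y h => mo.smul_compat b _ _ ?_) fun x y h => ?_
  · simpa using h
  · have := congrArg mo.toSyn.symm h
    simp only [shift, Equiv.symm_apply_apply, Prod.mk.injEq, add_right_inj] at this
    exact mo.toSyn.symm.injective (Prod.ext this.1 this.2)

theorem le_shift (b : σ →₀ ℕ) (x : mo.syn) : x ≤ mo.shift b x := by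
  obtain ⟨P, rfl⟩ := mo.toSyn.surjective x
  rw [shift_toSyn, ← Prod.mk.eta (p := P), mo.compat, map_add]
  exact le_add_of_nonneg_left (m.zero_le _)

theorem shift_zero : mo.shift 0 = id := by
  funext x
  obtain ⟨P, rfl⟩ := mo.toSyn.surjective x
  simp

end ModOrder

section Signature

variable {m : MonomialOrder σ} {mo : ModOrder σ n m} {α β : Fin n → MvPolynomial σ K}
  {P : (σ →₀ ℕ) × Fin n}

theorem mem_msupport : P ∈ msupport α ↔ (α P.2).coeff P.1 ≠ 0 := by
  classical
  simp only [msupport, Finset.mem_biUnion, Finset.mem_univ, true_and, Finset.mem_image,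
    mem_support_iff]
  exact ⟨fun ⟨_, _, ha, h⟩ => h ▸ ha, fun h => ⟨P.2, P.1, h, rfl⟩⟩

theorem coe_toSyn_le_sig (hP : P ∈ msupport α) : (mo.toSyn P : WithBot mo.syn) ≤ sig mo α :=
  Finset.le_max (Finset.mem_image_of_mem _ hP)

theorem sig_le_iff {S : WithBot mo.syn} :
    sig mo α ≤ S ↔ ∀ P ∈ msupport α, (mo.toSyn P : WithBot mo.syn) ≤ S := by
  simp only [sig, Finset.max_le_iff, Finset.forall_mem_image]

theorem exists_mem_msupport_of_sig_eq {x : mo.syn} (h : sig mo α = x) :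
    ∃ P ∈ msupport α, mo.toSyn P = x :=
  Finset.mem_image.mp (Finset.mem_of_max h)

theorem exists_sig_eq (hα : α ≠ 0) : ∃ P ∈ msupport α, sig mo α = mo.toSyn P := by
  obtain ⟨i, hi⟩ := Function.ne_iff.mp hα
  obtain ⟨d, hd⟩ := ne_zero_iff.mp hi
  obtain ⟨x, hx⟩ := WithBot.ne_bot_iff_exists.mp
    (ne_bot_of_le_ne_bot WithBot.coe_ne_bot (coe_toSyn_le_sig (mo := mo) (P := (d, i))
      (mem_msupport.mpr hd)))
  obtain ⟨P, hP, rfl⟩ := exists_mem_msupport_of_sig_eq hx.symm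
  exact ⟨P, hP, hx.symm⟩

theorem sig_sub_le : sig mo (α - β) ≤ max (sig mo α) (sig mo β) := by
  refine sig_le_iff.mpr fun P hP => ?_
  by_cases hα : (α P.2).coeff P.1 = 0
  · have hβ : (β P.2).coeff P.1 ≠ 0 := by
      simpa [mem_msupport, hα] using hP
    exact le_max_of_le_right (coe_toSyn_le_sig (mem_msupport.mpr hβ))
  · exact le_max_of_le_left (coe_toSyn_le_sig (mem_msupport.mpr hα))

theorem sig_sub_lt (hα : sig mo α ≤ mo.toSyn P) (hβ : sig mo β ≤ mo.toSyn P)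
    (hP : (α P.2).coeff P.1 = (β P.2).coeff P.1) : sig mo (α - β) < mo.toSyn P := by
  cases hx : sig mo (α - β) using WithBot.recBotCoe with
  | bot => exact WithBot.bot_lt_coe _
  | coe x =>
    obtain ⟨Q, hQ, rfl⟩ := exists_mem_msupport_of_sig_eq hx
    refine lt_of_le_of_ne (hx ▸ sig_sub_le.trans (max_le hα hβ)) fun h => ?_
    rw [WithBot.coe_inj, mo.toSyn.injective.eq_iff] at h
    subst h
    simp [mem_msupport, hP] at hQ

theorem mem_msupport_mulV {b : σ →₀ ℕ} {c : K} (hc : c ≠ 0) :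
    P ∈ msupport (mulV b c α) ↔ ∃ Q ∈ msupport α, (b + Q.1, Q.2) = P := by
  simp only [mem_msupport, mulV, coeff_monomial_mul']
  constructor
  · intro h
    split_ifs at h with hb
    · exact ⟨(P.1 - b, P.2), right_ne_zero_of_mul h, by simp [add_tsub_cancel_of_le hb]⟩
    · exact absurd rfl h
  · rintro ⟨Q, hQ, rfl⟩
    simpa [hc] using hQ

theorem sig_mulV {b : σ →₀ ℕ} {c : K} (hc : c ≠ 0) :
    sig mo (mulV b c α) = (sig mo α).map (mo.shift b) := by
  refine le_antisymm (sig_le_iff.mpr fun P hP => ?_) ?_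
  · obtain ⟨Q, hQ, rfl⟩ := (mem_msupport_mulV hc).mp hP
    simpa using (mo.shift_strictMono b).monotone.withBot_map (coe_toSyn_le_sig (mo := mo) hQ)
  · cases hx : sig mo α using WithBot.recBotCoe with
    | bot => simp
    | coe x =>
      obtain ⟨Q, hQ, rfl⟩ := exists_mem_msupport_of_sig_eq hx
      simpa [hx] using coe_toSyn_le_sig (mo := mo) ((mem_msupport_mulV hc).mpr ⟨Q, hQ, rfl⟩)

theorem sig_le_sig_mulV {b : σ →₀ ℕ} {c : K} (hc : c ≠ 0) :
    sig mo α ≤ sig mo (mulV b c α) := by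
  rw [sig_mulV hc]
  cases sig mo α using WithBot.recBotCoe with
  | bot => exact bot_le
  | coe x => exact WithBot.coe_le_coe.mpr (mo.le_shift b x)

theorem sig_eV (i : Fin n) : sig mo (eV i : Fin n → MvPolynomial σ K) = mo.toSyn (0, i) := by
  have h : ∀ P, P ∈ msupport (eV i : Fin n → MvPolynomial σ K) ↔ P = (0, i) := by
    classical
    rintro ⟨a, j⟩
    by_cases hj : j = i <;> simp [mem_msupport, eV, hj, coeff_one, eq_comm]
  exact le_antisymm (sig_le_iff.mpr fun P hP => by rw [(h P).mp hP])
    (coe_toSyn_le_sig ((h _).mpr rfl))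

end Signature

section SPairs

variable {m : MonomialOrder σ} {F α β : Fin n → MvPolynomial σ K}

theorem toSyn_lt_of_mem_support_sPoly {f g : MvPolynomial σ K} (hf : f ≠ 0) (hg : g ≠ 0)
    {x : σ →₀ ℕ} (hx : x ∈ (sPoly m f g).support) :
    m.toSyn x < m.toSyn (mlcm (lm m f) (lm m g)) := by
  set lam := mlcm (lm m f) (lm m g)
  have monic : ∀ p : MvPolynomial σ K, p ≠ 0 → lm m p ≤ lam →
      (∀ y ∈ (monomial (lam - lm m p) (lc m p)⁻¹ * p).support, m.toSyn y ≤ m.toSyn lam) ∧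
        (monomial (lam - lm m p) (lc m p)⁻¹ * p).coeff lam = 1 := by
    intro p hp hle
    refine ⟨fun y hy => ?_, ?_⟩
    · simpa [tsub_add_cancel_of_le hle] using toSyn_le_of_mem_support_monomial_mul (m := m) hy
    · simpa [tsub_add_cancel_of_le hle, lc_ne_zero hp] using
        coeff_monomial_mul_lm (m := m) (a := lam - lm m p) (c := (lc m p)⁻¹) (p := p)
  obtain ⟨hf₁, hf₂⟩ := monic f hf le_sup_left
  obtain ⟨hg₁, hg₂⟩ := monic g hg le_sup_right
  exact toSyn_lt_of_mem_support_sub hf₁ hg₁ (hf₂.trans hg₂.symm) hx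

theorem piMap_spair : piMap F (spair m F α β) = sPoly m (piMap F α) (piMap F β) := by
  simp [spair, sPoly, piMap, sub_mul, Finset.sum_sub_distrib, Finset.mul_sum, mul_assoc]

variable (m) in
/-- `(x^λ / lt(π α)) · α`; `spair m F α β` is the difference of the two such multiples for
`λ = lcm(lm(π α), lm(π β))`. -/
noncomputable def monicMul (F : Fin n → MvPolynomial σ K) (lam : σ →₀ ℕ)
    (α : Fin n → MvPolynomial σ K) : Fin n → MvPolynomial σ K :=
  mulV (lam - lm m (piMap F α)) (lc m (piMap F α))⁻¹ α

theorem mulV_monicMul {lam b : σ →₀ ℕ} {c : K} (hα : piMap F α ≠ 0) :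
    mulV b (c * lc m (piMap F α)) (monicMul m F lam α) =
      mulV (b + (lam - lm m (piMap F α))) c α := by
  rw [monicMul, mulV_mulV, mul_inv_cancel_right₀ (lc_ne_zero hα)]

end SPairs

def RegularSPairsSRedToZero (m : MonomialOrder σ) (mo : ModOrder σ n m)
    (F : Fin n → MvPolynomial σ K) (B : Set (Fin n → MvPolynomial σ K)) (T : WithBot mo.syn) :
    Prop :=
  ∀ α ∈ B, ∀ β ∈ B, piMap F α ≠ 0 → piMap F β ≠ 0 →
    sig mo (monicMul m F (mlcm (lm m (piMap F α)) (lm m (piMap F β))) α) ≠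
      sig mo (monicMul m F (mlcm (lm m (piMap F α)) (lm m (piMap F β))) β) →
    max (sig mo (monicMul m F (mlcm (lm m (piMap F α)) (lm m (piMap F β))) α))
        (sig mo (monicMul m F (mlcm (lm m (piMap F α)) (lm m (piMap F β))) β)) < T →
    SRedToZero m mo F B (spair m F α β)

/-- A term `c x^a β` of a representation `Σ c x^a π(β)`. -/
structure Term (σ K : Type*) [CommSemiring K] (n : ℕ) where
  exp : σ →₀ ℕ
  coeff : K
  vec : Fin n → MvPolynomial σ K

namespace Term

variable {m : MonomialOrder σ}

noncomputable def toVec (t : Term σ K n) : Fin n → MvPolynomial σ K := mulV t.exp t.coeff t.vec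

noncomputable def eval (t : Term σ K n) (F : Fin n → MvPolynomial σ K) : MvPolynomial σ K :=
  monomial t.exp t.coeff * piMap F t.vec

noncomputable def deg (t : Term σ K n) (F : Fin n → MvPolynomial σ K) (m : MonomialOrder σ) :
    m.syn :=
  m.toSyn (t.exp + lm m (piMap F t.vec))

noncomputable def key (t : Term σ K n) (F : Fin n → MvPolynomial σ K) (mo : ModOrder σ n m) :
    m.syn ×ₗ WithBot mo.syn :=
  toLex (t.deg F m, sig mo t.toVec)

noncomputable def mulMon (t : Term σ K n) (b : σ →₀ ℕ) (c : K) : Term σ K n :=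
  ⟨b + t.exp, c * t.coeff, t.vec⟩

structure IsValid (t : Term σ K n) (mo : ModOrder σ n m) (F : Fin n → MvPolynomial σ K)
    (B : Set (Fin n → MvPolynomial σ K)) (S : WithBot mo.syn) : Prop where
  vec_mem : t.vec ∈ B
  piMap_ne_zero : piMap F t.vec ≠ 0
  coeff_ne_zero : t.coeff ≠ 0
  sig_le : sig mo t.toVec ≤ S

variable {mo : ModOrder σ n m} {F : Fin n → MvPolynomial σ K}
  {B : Set (Fin n → MvPolynomial σ K)} {t : Term σ K n}

theorem IsValid.mono {S S' : WithBot mo.syn} (h : t.IsValid mo F B S) (hS : S ≤ S') :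
    t.IsValid mo F B S' :=
  ⟨h.vec_mem, h.piMap_ne_zero, h.coeff_ne_zero, h.sig_le.trans hS⟩

theorem eval_eq_piMap_toVec : t.eval F = piMap F t.toVec := (piMap_mulV _ _).symm

theorem toVec_mulMon (b : σ →₀ ℕ) (c : K) : (t.mulMon b c).toVec = mulV b c t.toVec :=
  (mulV_mulV _ _ _ _).symm

theorem eval_mulMon (b : σ →₀ ℕ) (c : K) :
    (t.mulMon b c).eval F = monomial b c * t.eval F := by
  simp [eval, mulMon, ← mul_assoc, monomial_mul]

theorem deg_mulMon (b : σ →₀ ℕ) (c : K) :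
    (t.mulMon b c).deg F m = m.toSyn b + t.deg F m := by
  simp [deg, mulMon, add_assoc]

theorem IsValid.toVec_ne_zero {S : WithBot mo.syn} (h : t.IsValid mo F B S) : t.toVec ≠ 0 :=
  ne_zero_of_piMap_ne_zero (F := F) (t.eval_eq_piMap_toVec ▸
    mul_ne_zero (monomial_eq_zero.not.mpr h.coeff_ne_zero) h.piMap_ne_zero)

theorem sig_toVec_mulMon_zero {c : K} (hc : c ≠ 0) :
    sig mo (t.mulMon 0 c).toVec = sig mo t.toVec := by
  rw [toVec_mulMon, sig_mulV hc, mo.shift_zero, WithBot.map_id, id]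

theorem key_mulMon_zero {c : K} (hc : c ≠ 0) : (t.mulMon 0 c).key F mo = t.key F mo := by
  simp [key, deg_mulMon, sig_toVec_mulMon_zero hc]

theorem toSyn_le_deg {x : σ →₀ ℕ} (hx : x ∈ (t.eval F).support) :
    m.toSyn x ≤ t.deg F m :=
  toSyn_le_of_mem_support_monomial_mul hx

end Term

noncomputable def evalSum (F : Fin n → MvPolynomial σ K) (L : Multiset (Term σ K n)) :
    MvPolynomial σ K :=
  (L.map (·.eval F)).sum

section Representation

variable {m : MonomialOrder σ} {mo : ModOrder σ n m} {F : Fin n → MvPolynomial σ K}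
  {B : Set (Fin n → MvPolynomial σ K)}

@[simp]
theorem evalSum_zero : evalSum F 0 = 0 := rfl

@[simp]
theorem evalSum_cons (t : Term σ K n) (L : Multiset (Term σ K n)) :
    evalSum F (t ::ₘ L) = t.eval F + evalSum F L := by
  simp [evalSum]

@[simp]
theorem evalSum_add (L L' : Multiset (Term σ K n)) :
    evalSum F (L + L') = evalSum F L + evalSum F L' := by
  simp [evalSum]

theorem evalSum_map_mulMon (b : σ →₀ ℕ) (c : K) (L : Multiset (Term σ K n)) :
    evalSum F (L.map (Term.mulMon · b c)) = monomial b c * evalSum F L := by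
  simp [evalSum, Term.eval_mulMon, Multiset.sum_map_mul_left]

theorem exists_toSyn_le_deg {L : Multiset (Term σ K n)} {x : σ →₀ ℕ}
    (hx : x ∈ (evalSum F L).support) : ∃ t ∈ L, m.toSyn x ≤ t.deg F m := by
  induction L using Multiset.induction_on with
  | empty => simp at hx
  | cons t L ih =>
    classical
    rw [evalSum_cons] at hx
    rcases Finset.mem_union.mp (support_add hx) with hx | hx
    · exact ⟨t, Multiset.mem_cons_self t L, t.toSyn_le_deg hx⟩
    · obtain ⟨t', ht', hle⟩ := ih hx
      exact ⟨t', Multiset.mem_cons_of_mem ht', hle⟩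

structure IsSigRep (mo : ModOrder σ n m) (F : Fin n → MvPolynomial σ K)
    (B : Set (Fin n → MvPolynomial σ K)) (γ : Fin n → MvPolynomial σ K)
    (L : Multiset (Term σ K n)) : Prop where
  valid : ∀ t ∈ L, t.IsValid mo F B (sig mo γ)
  evalSum_eq : evalSum F L = piMap F γ

variable {α β : Fin n → MvPolynomial σ K} {L L' : Multiset (Term σ K n)}

theorem IsSigRep.add (hL : IsSigRep mo F B α L) (hL' : IsSigRep mo F B β L')
    (hα : sig mo α ≤ sig mo (α + β)) (hβ : sig mo β ≤ sig mo (α + β)) :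
    IsSigRep mo F B (α + β) (L + L') where
  valid t ht := (Multiset.mem_add.mp ht).elim (fun ht => (hL.valid t ht).mono hα)
    (fun ht => (hL'.valid t ht).mono hβ)
  evalSum_eq := by rw [evalSum_add, hL.evalSum_eq, hL'.evalSum_eq, piMap_add]

theorem IsSigRep.mulMon (hL : IsSigRep mo F B α L) (b : σ →₀ ℕ) {c : K} (hc : c ≠ 0) :
    IsSigRep mo F B (mulV b c α) (L.map (Term.mulMon · b c)) where
  valid t' ht' := by
    obtain ⟨t, ht, rfl⟩ := Multiset.mem_map.mp ht'
    have h := hL.valid t ht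
    refine ⟨h.vec_mem, h.piMap_ne_zero, mul_ne_zero hc h.coeff_ne_zero, ?_⟩
    rw [Term.toVec_mulMon, sig_mulV hc, sig_mulV hc]
    exact (mo.shift_strictMono b).monotone.withBot_map h.sig_le
  evalSum_eq := by rw [evalSum_map_mulMon, hL.evalSum_eq, piMap_mulV]

theorem SRedToZero.exists_isSigRep (h : SRedToZero m mo F B α) {D : Set m.syn}
    (hD : IsLowerSet D) (hα : ∀ x ∈ (piMap F α).support, m.toSyn x ∈ D) :
    ∃ L, IsSigRep mo F B α L ∧ ∀ t ∈ L, t.deg F m ∈ D := by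
  obtain ⟨γ, hchain, hγ⟩ := h
  induction hchain using Relation.ReflTransGen.head_induction_on with
  | refl => exact ⟨0, ⟨by simp, by simp [hγ]⟩, by simp⟩
  | @head α₁ α₂ hstep _ ih =>
    obtain ⟨β, hβB, a, c, hc, hπβ, hmem, -, hsig, hα₂⟩ := hstep
    let t : Term σ K n := ⟨a, c, β⟩
    replace hα₂ : α₂ = α₁ - t.toVec := hα₂
    subst hα₂
    have hπ : piMap F α₁ = piMap F (α₁ - t.toVec) + t.eval F := by
      rw [piMap_sub, Term.eval_eq_piMap_toVec, sub_add_cancel]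
    have hsig₂ : sig mo (α₁ - t.toVec) ≤ sig mo α₁ :=
      sig_sub_le.trans (max_le le_rfl hsig)
    obtain ⟨L, hL, hLD⟩ := ih fun x hx => by
      rw [piMap_sub, ← Term.eval_eq_piMap_toVec, sub_eq_add_neg] at hx
      classical
      rcases Finset.mem_union.mp (support_add hx) with hx | hx
      · exact hα x hx
      · rw [support_neg] at hx
        exact hD (toSyn_le_of_mem_support_monomial_mul hx) (hα _ hmem)
    refine ⟨t ::ₘ L, ⟨fun t' ht' => ?_, ?_⟩, fun t' ht' => ?_⟩
    · rcases Multiset.mem_cons.mp ht' with rfl | ht'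
      exacts [⟨hβB, hπβ, hc, hsig⟩, (hL.valid t' ht').mono hsig₂]
    · rw [evalSum_cons, hL.evalSum_eq, hπ, add_comm]
    · rcases Multiset.mem_cons.mp ht' with rfl | ht'
      exacts [hα _ hmem, hLD t' ht']

end Representation

section SupCount

variable {α : Type*} [LinearOrder α] [OrderBot α]

def supCount (X : Multiset α) : α ×ₗ ℕ := toLex (X.sup, X.count X.sup)

theorem supCount_lt {a : α} {X Y Z : Multiset α} (hX : ∀ x ∈ X, x ≤ a) (hY : Y ≤ X)
    (hZ : ∀ z ∈ Z, z < a) : supCount (Z + Y) < supCount (a ::ₘ X) := by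
  have hsup : (a ::ₘ X).sup = a := by
    rw [Multiset.sup_cons, sup_eq_left]
    exact Multiset.sup_le.mpr hX
  have hle : (Z + Y).sup ≤ a := Multiset.sup_le.mpr fun x hx =>
    (Multiset.mem_add.mp hx).elim (fun h => (hZ x h).le) fun h => hX x (Multiset.mem_of_le hY h)
  rw [supCount, supCount, hsup, Prod.Lex.toLex_lt_toLex]
  refine hle.lt_or_eq.imp id fun heq => ⟨heq, ?_⟩
  have hZa : Z.count a = 0 := Multiset.count_eq_zero.mpr fun h => (hZ a h).false
  dsimp only at heq ⊢
  rw [heq, Multiset.count_add, hZa, zero_add, Multiset.count_cons_self]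
  exact Nat.lt_succ_of_le (Multiset.count_le_of_le a hY)

end SupCount

def IsTopSReducible (m : MonomialOrder σ) (mo : ModOrder σ n m) (F : Fin n → MvPolynomial σ K)
    (B : Set (Fin n → MvPolynomial σ K)) (γ : Fin n → MvPolynomial σ K) : Prop :=
  ∃ t : Term σ K n, t.IsValid mo F B (sig mo γ) ∧
    t.exp + lm m (piMap F t.vec) = lm m (piMap F γ) ∧
    t.coeff * lc m (piMap F t.vec) = lc m (piMap F γ)

section TopReduction

variable {m : MonomialOrder σ} {mo : ModOrder σ n m} {F : Fin n → MvPolynomial σ K}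
  {B : Set (Fin n → MvPolynomial σ K)} {γ : Fin n → MvPolynomial σ K}

theorem IsTopSReducible.exists_sRedStep (h : IsTopSReducible m mo F B γ) (hγ : piMap F γ ≠ 0) :
    ∃ γ', SRedStep m mo F B γ γ' ∧ sig mo γ' ≤ sig mo γ ∧
      (piMap F γ' = 0 ∨ m.toSyn (lm m (piMap F γ')) < m.toSyn (lm m (piMap F γ))) := by
  obtain ⟨t, ht, hlm, hlc⟩ := h
  refine ⟨γ - t.toVec, ⟨t.vec, ht.vec_mem, t.exp, t.coeff, ht.coeff_ne_zero, ht.piMap_ne_zero,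
    hlm ▸ lm_mem_support hγ, hlm ▸ hlc, ht.sig_le, rfl⟩,
    sig_sub_le.trans (max_le le_rfl ht.sig_le), or_iff_not_imp_left.mpr fun h0 => ?_⟩
  rw [piMap_sub, ← Term.eval_eq_piMap_toVec] at h0 ⊢
  refine toSyn_lt_of_mem_support_sub (fun y hy => toSyn_le_toSyn_lm hy)
    (fun y hy => hlm ▸ t.toSyn_le_deg hy) ?_ (lm_mem_support h0)
  rw [← hlm, Term.eval, coeff_monomial_mul_lm, hlm, hlc, lc]

theorem IsSigRep.isTopSReducible_of_deg_lt {t : Term σ K n} {R : Multiset (Term σ K n)}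
    (hL : IsSigRep mo F B γ (t ::ₘ R)) (hlt : ∀ t' ∈ R, t'.deg F m < t.deg F m) :
    IsTopSReducible m mo F B γ := by
  have hv := hL.valid t (Multiset.mem_cons_self t R)
  have hR : (evalSum F R).coeff (t.exp + lm m (piMap F t.vec)) = 0 := by
    by_contra h
    obtain ⟨t', ht', hle⟩ := exists_toSyn_le_deg (mem_support_iff.mpr h)
    exact (hle.trans_lt (hlt t' ht')).false
  have hcoeff : (piMap F γ).coeff (t.exp + lm m (piMap F t.vec)) =
      t.coeff * lc m (piMap F t.vec) := by
    rw [← hL.evalSum_eq, evalSum_cons, coeff_add, hR, add_zero, Term.eval, coeff_monomial_mul_lm]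
  have hlm : lm m (piMap F γ) = t.exp + lm m (piMap F t.vec) := by
    have hne : t.coeff * lc m (piMap F t.vec) ≠ 0 :=
      mul_ne_zero hv.coeff_ne_zero (lc_ne_zero hv.piMap_ne_zero)
    refine lm_eq_of_forall_le (hcoeff ▸ hne) fun y hy => ?_
    rw [← hL.evalSum_eq] at hy
    obtain ⟨t', ht', hle⟩ := exists_toSyn_le_deg (m := m) hy
    rcases Multiset.mem_cons.mp ht' with rfl | ht'
    exacts [hle, hle.trans (hlt t' ht').le]
  exact ⟨t, hv, hlm.symm, by rw [← hcoeff, ← hlm]; rfl⟩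

end TopReduction

section Cancellation

variable {m : MonomialOrder σ} {mo : ModOrder σ n m} {F : Fin n → MvPolynomial σ K}
  {B : Set (Fin n → MvPolynomial σ K)} {t₁ t₂ : Term σ K n} {S : WithBot mo.syn}

theorem exists_cancel_of_sig_eq (h₂ : t₂.toVec ≠ 0) (hdeg : t₂.deg F m = t₁.deg F m)
    (hsig : sig mo t₂.toVec = sig mo t₁.toVec)
    (below : ∀ δ, sig mo δ < sig mo t₁.toVec → SRedToZero m mo F B δ) :
    ∃ (N : Multiset (Term σ K n)) (d : K),
      (∀ t ∈ N, t.IsValid mo F B (sig mo t₁.toVec) ∧ t.key F mo < t₁.key F mo) ∧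
      t₁.eval F = evalSum F N + monomial 0 d * t₂.eval F := by
  obtain ⟨P, hP₂, hsigP⟩ := exists_sig_eq (mo := mo) h₂
  obtain ⟨P', hP₁, hPP'⟩ := exists_mem_msupport_of_sig_eq (hsig ▸ hsigP)
  obtain rfl : P = P' := (mo.toSyn.injective hPP').symm
  set d := (t₁.toVec P.2).coeff P.1 / (t₂.toVec P.2).coeff P.1
  have hd : d ≠ 0 := div_ne_zero (mem_msupport.mp hP₁) (mem_msupport.mp hP₂)
  have hsig' := Term.sig_toVec_mulMon_zero (mo := mo) (t := t₂) hd
  set u := t₁.toVec - (t₂.mulMon 0 d).toVec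
  have hu : sig mo u < sig mo t₁.toVec := by
    rw [← hsig, hsigP]
    refine sig_sub_lt (hsig ▸ hsigP).le (hsig' ▸ hsigP).le ?_
    simp [Term.toVec_mulMon, mulV, d, div_mul_cancel₀ _ (mem_msupport.mp hP₂)]
  have hπu : piMap F u = t₁.eval F - (t₂.mulMon 0 d).eval F := by
    rw [piMap_sub, Term.eval_eq_piMap_toVec, Term.eval_eq_piMap_toVec]
  obtain ⟨N, hN, hNdeg⟩ := (below u hu).exists_isSigRep (D := Set.Iic (t₁.deg F m))
    (isLowerSet_Iic _) fun x hx => by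
      classical
      rw [hπu] at hx
      rcases Finset.mem_union.mp (support_sub σ _ _ hx) with hx | hx
      · exact Term.toSyn_le_deg hx
      · simpa [Term.deg_mulMon, hdeg] using Term.toSyn_le_deg (m := m) hx
  refine ⟨N, d, fun t ht => ⟨(hN.valid t ht).mono hu.le, Prod.Lex.toLex_strictMono
    (Prod.mk_lt_mk_of_le_of_lt (hNdeg t ht) (((hN.valid t ht).sig_le).trans_lt hu))⟩, ?_⟩
  rw [hN.evalSum_eq, hπu, Term.eval_mulMon, sub_add_cancel]

theorem exists_mulV_monicMul_eq (h₁ : piMap F t₁.vec ≠ 0) (h₂ : piMap F t₂.vec ≠ 0)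
    (hdeg : t₂.deg F m = t₁.deg F m) :
    ∃ b : σ →₀ ℕ,
      m.toSyn b + m.toSyn (mlcm (lm m (piMap F t₁.vec)) (lm m (piMap F t₂.vec))) =
        t₁.deg F m ∧
      mulV b (t₁.coeff * lc m (piMap F t₁.vec))
        (monicMul m F (mlcm (lm m (piMap F t₁.vec)) (lm m (piMap F t₂.vec))) t₁.vec) =
        t₁.toVec ∧
      mulV b (t₂.coeff * lc m (piMap F t₂.vec))
        (monicMul m F (mlcm (lm m (piMap F t₁.vec)) (lm m (piMap F t₂.vec))) t₂.vec) =
        t₂.toVec := by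
  set lam := mlcm (lm m (piMap F t₁.vec)) (lm m (piMap F t₂.vec))
  have hQ : t₂.exp + lm m (piMap F t₂.vec) = t₁.exp + lm m (piMap F t₁.vec) :=
    m.toSyn.injective hdeg
  have hlam : lam ≤ t₁.exp + lm m (piMap F t₁.vec) := sup_le le_add_self (hQ ▸ le_add_self)
  refine ⟨t₁.exp + lm m (piMap F t₁.vec) - lam, ?_, ?_, ?_⟩
  · rw [← map_add, tsub_add_cancel_of_le hlam]
    rfl
  · rw [mulV_monicMul h₁, tsub_add_tsub_cancel hlam le_sup_left, add_tsub_cancel_right]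
    rfl
  · rw [mulV_monicMul h₂, tsub_add_tsub_cancel hlam le_sup_right, ← hQ, add_tsub_cancel_right]
    rfl

/-- Up to scalars, `t₁` and `t₂` are `x^b` times the two halves of the S-pair of their vectors.
The pair is regular because multiplication by `x^b` is strictly monotone on signatures, so it
𝔰-reduces to zero by hypothesis. -/
theorem exists_cancel_of_sig_lt {T : WithBot mo.syn}
    (hpairs : RegularSPairsSRedToZero m mo F B T) (h₁ : t₁.IsValid mo F B S)
    (h₂ : t₂.IsValid mo F B S) (hdeg : t₂.deg F m = t₁.deg F m)
    (hsig : sig mo t₂.toVec < sig mo t₁.toVec) (hT : sig mo t₁.toVec < T) :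
    ∃ (N : Multiset (Term σ K n)) (d : K),
      (∀ t ∈ N, t.IsValid mo F B (sig mo t₁.toVec) ∧ t.key F mo < t₁.key F mo) ∧
      t₁.eval F = evalSum F N + monomial 0 d * t₂.eval F := by
  set lam := mlcm (lm m (piMap F t₁.vec)) (lm m (piMap F t₂.vec))
  obtain ⟨b, hb, hv₁, hv₂⟩ :=
    exists_mulV_monicMul_eq h₁.piMap_ne_zero h₂.piMap_ne_zero hdeg
  set c₁ := t₁.coeff * lc m (piMap F t₁.vec)
  set c₂ := t₂.coeff * lc m (piMap F t₂.vec)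
  have hc₁ : c₁ ≠ 0 := mul_ne_zero h₁.coeff_ne_zero (lc_ne_zero h₁.piMap_ne_zero)
  have hc₂ : c₂ ≠ 0 := mul_ne_zero h₂.coeff_ne_zero (lc_ne_zero h₂.piMap_ne_zero)
  have hs₁ := hv₁ ▸ sig_mulV (mo := mo) hc₁
  have hs₂ := hv₂ ▸ sig_mulV (mo := mo) hc₂
  have hle₁ := hv₁ ▸ sig_le_sig_mulV (mo := mo) (b := b) hc₁
  have hle₂ := hv₂ ▸ sig_le_sig_mulV (mo := mo) (b := b) hc₂
  have hspair := hpairs _ h₁.vec_mem _ h₂.vec_mem h₁.piMap_ne_zero h₂.piMap_ne_zero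
    (fun h => hsig.ne (by rw [hs₁, hs₂, h]))
    (max_lt (hle₁.trans_lt hT) ((hle₂.trans hsig.le).trans_lt hT))
  obtain ⟨L, hL, hLdeg⟩ := hspair.exists_isSigRep (D := Set.Iio (m.toSyn lam))
    (isLowerSet_Iio _) fun x hx => by
      rw [piMap_spair] at hx
      exact toSyn_lt_of_mem_support_sPoly h₁.piMap_ne_zero h₂.piMap_ne_zero hx
  have hN := hL.mulMon b hc₁
  have hsigN : sig mo (mulV b c₁ (spair m F t₁.vec t₂.vec)) ≤ sig mo t₁.toVec := by
    rw [sig_mulV hc₁]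
    calc _ ≤ (max (sig mo (monicMul m F lam t₁.vec)) (sig mo (monicMul m F lam t₂.vec))).map
          (mo.shift b) := (mo.shift_strictMono b).monotone.withBot_map sig_sub_le
      _ = sig mo t₁.toVec := by
        rw [(mo.shift_strictMono b).monotone.withBot_map.map_max, ← hs₁, ← hs₂,
          max_eq_left hsig.le]
  refine ⟨L.map (·.mulMon b c₁), c₁ / c₂,
    fun t ht => ⟨(hN.valid t ht).mono hsigN, ?_⟩, ?_⟩
  · obtain ⟨s, hs, rfl⟩ := Multiset.mem_map.mp ht
    refine Prod.Lex.toLex_lt_toLex.mpr (Or.inl ?_)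
    rw [Term.deg_mulMon, ← hb]
    exact add_lt_add_right (hLdeg s hs) _
  · have hsp : spair m F t₁.vec t₂.vec =
        monicMul m F lam t₁.vec - monicMul m F lam t₂.vec := rfl
    rw [hN.evalSum_eq, piMap_mulV, hsp, piMap_sub, Term.eval_eq_piMap_toVec,
      Term.eval_eq_piMap_toVec, ← hv₁, ← hv₂, piMap_mulV, piMap_mulV, ← mul_assoc,
      monomial_mul, zero_add, div_mul_cancel₀ _ hc₂]
    ring

end Cancellation

section Criterion

variable {m : MonomialOrder σ} {mo : ModOrder σ n m} {F : Fin n → MvPolynomial σ K}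
  {B : Set (Fin n → MvPolynomial σ K)} {γ : Fin n → MvPolynomial σ K}

theorem IsSigRep.exists_lt_of_cancel {t₁ t₂ : Term σ K n} {R N : Multiset (Term σ K n)}
    {d : K} (hL : IsSigRep mo F B γ (t₁ ::ₘ t₂ ::ₘ R))
    (hmax : ∀ t ∈ t₂ ::ₘ R, t.key F mo ≤ t₁.key F mo)
    (hN : ∀ t ∈ N, t.IsValid mo F B (sig mo t₁.toVec) ∧ t.key F mo < t₁.key F mo)
    (heval : t₁.eval F = evalSum F N + monomial 0 d * t₂.eval F) :
    ∃ L, IsSigRep mo F B γ L ∧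
      supCount (L.map (·.key F mo)) < supCount ((t₁ ::ₘ t₂ ::ₘ R).map (·.key F mo)) := by
  classical
  have hv₁ := hL.valid t₁ (Multiset.mem_cons_self _ _)
  have hv₂ := hL.valid t₂ (Multiset.mem_cons_of_mem (Multiset.mem_cons_self _ _))
  have hR : ∀ t ∈ R, t.IsValid mo F B (sig mo γ) := fun t ht =>
    hL.valid t (Multiset.mem_cons_of_mem (Multiset.mem_cons_of_mem ht))
  -- `t₂` absorbs the multiple `d t₂`, and disappears if the coefficients cancel.
  let M : Multiset (Term σ K n) := if 1 + d = 0 then R else t₂.mulMon 0 (1 + d) ::ₘ R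
  have hMsum : evalSum F M = (t₂.mulMon 0 (1 + d)).eval F + evalSum F R := by
    unfold M
    split_ifs with h <;> simp [Term.eval_mulMon, h]
  have hMkey : M.map (·.key F mo) ≤ (t₂ ::ₘ R).map (·.key F mo) := by
    unfold M
    split_ifs with h
    · simpa using Multiset.le_cons_self _ _
    · rw [Multiset.map_cons, Multiset.map_cons, Term.key_mulMon_zero h]
  have hMvalid : ∀ t ∈ M, t.IsValid mo F B (sig mo γ) := by
    unfold M
    split_ifs with h
    · exact hR
    · refine Multiset.forall_mem_cons.mpr ⟨⟨hv₂.vec_mem, hv₂.piMap_ne_zero,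
        mul_ne_zero h hv₂.coeff_ne_zero, ?_⟩, hR⟩
      exact (Term.sig_toVec_mulMon_zero h).trans_le hv₂.sig_le
  refine ⟨N + M, ⟨fun t ht => ?_, ?_⟩, ?_⟩
  · rcases Multiset.mem_add.mp ht with ht | ht
    exacts [(hN t ht).1.mono hv₁.sig_le, hMvalid t ht]
  · rw [evalSum_add, hMsum, ← hL.evalSum_eq, evalSum_cons, evalSum_cons, heval,
      Term.eval_mulMon, map_add, ← C_apply, C_1]
    ring
  · rw [Multiset.map_add, Multiset.map_cons]
    refine supCount_lt (fun x hx => ?_) hMkey fun z hz => ?_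
    · obtain ⟨t, ht, rfl⟩ := Multiset.mem_map.mp hx
      exact hmax t ht
    · obtain ⟨t, ht, rfl⟩ := Multiset.mem_map.mp hz
      exact (hN t ht).2

theorem IsSigRep.isTopSReducible {T : WithBot mo.syn}
    (hpairs : RegularSPairsSRedToZero m mo F B T) (hγT : sig mo γ < T) (hγ : piMap F γ ≠ 0)
    (below : ∀ δ, sig mo δ < sig mo γ → SRedToZero m mo F B δ) {L : Multiset (Term σ K n)}
    (hL : IsSigRep mo F B γ L) : IsTopSReducible m mo F B γ := by
  induction L using (InvImage.wf (fun L : Multiset (Term σ K n) => supCount (L.map (·.key F mo)))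
    wellFounded_lt).induction with
  | _ L ih =>
    have hne : L ≠ 0 := by
      rintro rfl
      exact hγ (by simpa using hL.evalSum_eq.symm)
    obtain ⟨t₁, ht₁, hmax⟩ := Multiset.exists_max_image (·.key F mo) hne
    obtain ⟨R, rfl⟩ := Multiset.exists_cons_of_mem ht₁
    by_cases htop : ∃ t₂ ∈ R, t₂.deg F m = t₁.deg F m
    · obtain ⟨t₂, ht₂, hdeg⟩ := htop
      obtain ⟨R, rfl⟩ := Multiset.exists_cons_of_mem ht₂
      have hv₁ := hL.valid t₁ (by simp)
      have hv₂ := hL.valid t₂ (by simp)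
      have hsig : sig mo t₂.toVec ≤ sig mo t₁.toVec :=
        (Prod.Lex.toLex_le_toLex'.mp (hmax t₂ (by simp))).2 hdeg
      obtain ⟨N, d, hN, heval⟩ := hsig.lt_or_eq.elim
        (fun hlt => exists_cancel_of_sig_lt hpairs hv₁ hv₂ hdeg hlt
          (hv₁.sig_le.trans_lt hγT))
        (fun heq => exists_cancel_of_sig_eq hv₂.toVec_ne_zero hdeg heq
          fun δ hδ => below δ (hδ.trans_le hv₁.sig_le))
      obtain ⟨L', hL', hlt⟩ :=
        hL.exists_lt_of_cancel (fun t ht => hmax t (Multiset.mem_cons_of_mem ht)) hN heval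
      exact ih L' hlt hL'
    · push Not at htop
      refine hL.isTopSReducible_of_deg_lt fun t ht => lt_of_le_of_ne ?_ (htop t ht)
      exact (Prod.Lex.toLex_le_toLex'.mp (hmax t (Multiset.mem_cons_of_mem ht))).1

theorem exists_isSigRep {T : WithBot mo.syn}
    (hbasis : ∀ i : Fin n, sig mo (eV i : Fin n → MvPolynomial σ K) < T →
      SRedToZero m mo F B (eV i))
    (hγT : sig mo γ < T) (hγ : γ ≠ 0)
    (below : ∀ δ, sig mo δ < sig mo γ → SRedToZero m mo F B δ) :
    ∃ L, IsSigRep mo F B γ L := by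
  obtain ⟨⟨a, i⟩, hP, hsig⟩ := exists_sig_eq (mo := mo) hγ
  have hc : (γ i).coeff a ≠ 0 := mem_msupport.mp hP
  have hlead : sig mo (mulV a ((γ i).coeff a) (eV i)) = sig mo γ := by
    simp [sig_mulV hc, sig_eV, hsig]
  have hδ : sig mo (γ - mulV a ((γ i).coeff a) (eV i)) < sig mo γ := by
    rw [hsig]
    exact sig_sub_lt hsig.le (hlead.trans hsig).le (by classical simp [mulV, eV, coeff_monomial])
  obtain ⟨L₁, hL₁, -⟩ := (below _ hδ).exists_isSigRep isLowerSet_univ fun _ _ => trivial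
  have heV : sig mo (eV i : Fin n → MvPolynomial σ K) < T :=
    (sig_le_sig_mulV hc).trans_lt (hlead ▸ hγT)
  obtain ⟨L₂, hL₂, -⟩ := (hbasis i heV).exists_isSigRep isLowerSet_univ fun _ _ => trivial
  have hL := hL₁.add (hL₂.mulMon a hc) (by rw [sub_add_cancel]; exact hδ.le)
    (by rw [sub_add_cancel, hlead])
  exact ⟨_, sub_add_cancel γ _ ▸ hL⟩

end Criterion

theorem sig_buchberger_criterion_general (m : MonomialOrder σ) (mo : ModOrder σ n m)
    (F : Fin n → MvPolynomial σ K) (B : Set (Fin n → MvPolynomial σ K))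
    (T : (σ →₀ ℕ) × Fin n)
    (hpairs : ∀ α ∈ B, ∀ β ∈ B, piMap F α ≠ 0 → piMap F β ≠ 0 →
      -- the S-pair is regular:
      sig mo (mulV (mlcm (lm m (piMap F α)) (lm m (piMap F β)) - lm m (piMap F α))
          (lc m (piMap F α))⁻¹ α) ≠
        sig mo (mulV (mlcm (lm m (piMap F α)) (lm m (piMap F β)) - lm m (piMap F β))
          (lc m (piMap F β))⁻¹ β) →
      -- its signature is below T:
      max (sig mo (mulV (mlcm (lm m (piMap F α)) (lm m (piMap F β)) - lm m (piMap F α))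
            (lc m (piMap F α))⁻¹ α))
          (sig mo (mulV (mlcm (lm m (piMap F α)) (lm m (piMap F β)) - lm m (piMap F β))
            (lc m (piMap F β))⁻¹ β)) < (mo.toSyn T : WithBot mo.syn) →
      SRedToZero m mo F B (spair m F α β))
    (hbasis : ∀ i : Fin n, sig mo (eV i : Fin n → MvPolynomial σ K) < (mo.toSyn T : WithBot mo.syn) →
      SRedToZero m mo F B (eV i)) :
    SigGBUpTo m mo F B (mo.toSyn T : WithBot mo.syn) := by
  intro γ hγT
  induction γ using (InvImage.wf (fun γ => toLex (sig mo γ, m.toSyn (lm m (piMap F γ))))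
    wellFounded_lt).induction with
  | _ γ ih =>
    by_cases hγ : piMap F γ = 0
    · exact ⟨γ, .refl, hγ⟩
    have below : ∀ δ, sig mo δ < sig mo γ → SRedToZero m mo F B δ := fun δ hδ =>
      ih δ (Prod.Lex.toLex_lt_toLex.mpr (Or.inl hδ)) (hδ.trans hγT)
    obtain ⟨L, hL⟩ := exists_isSigRep hbasis hγT (ne_zero_of_piMap_ne_zero hγ) below
    obtain ⟨γ', hstep, hsig, hγ'⟩ :=
      (hL.isTopSReducible hpairs hγT hγ below).exists_sRedStep hγ
    obtain ⟨γ'', hchain, hγ''⟩ : SRedToZero m mo F B γ' :=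
      hγ'.elim (fun h => ⟨γ', .refl, h⟩) fun hlt =>
        ih γ' (Prod.Lex.toLex_lt_toLex'.mpr ⟨hsig, fun _ => hlt⟩) (hsig.trans_lt hγT)
    exact ⟨γ'', .head hstep hchain, hγ''⟩

/-- **Signature Buchberger criterion.** Let `T` be a module monomial and `B` finite. If every
regular S-pair of elements of `B` with signature `< T` 𝔰-reduces to zero w.r.t. `B`, and every
basis vector `eᵢ` with `eᵢ < T` 𝔰-reduces to zero w.r.t. `B`, then `B` is a signature Gröbner
basis up to signature `T`. (An S-pair is regular when its two summands have different
signatures, and then its signature is their maximum.) -/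
theorem sig_buchberger_criterion (m : MonomialOrder σ) (mo : ModOrder σ n m)
    (F : Fin n → MvPolynomial σ K) (B : Set (Fin n → MvPolynomial σ K)) (hBfin : B.Finite)
    (T : (σ →₀ ℕ) × Fin n)
    (hpairs : ∀ α ∈ B, ∀ β ∈ B, piMap F α ≠ 0 → piMap F β ≠ 0 →
      -- the S-pair is regular:
      sig mo (mulV (mlcm (lm m (piMap F α)) (lm m (piMap F β)) - lm m (piMap F α))
          (lc m (piMap F α))⁻¹ α) ≠
        sig mo (mulV (mlcm (lm m (piMap F α)) (lm m (piMap F β)) - lm m (piMap F β))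
          (lc m (piMap F β))⁻¹ β) →
      -- its signature is below T:
      max (sig mo (mulV (mlcm (lm m (piMap F α)) (lm m (piMap F β)) - lm m (piMap F α))
            (lc m (piMap F α))⁻¹ α))
          (sig mo (mulV (mlcm (lm m (piMap F α)) (lm m (piMap F β)) - lm m (piMap F β))
            (lc m (piMap F β))⁻¹ β)) < (mo.toSyn T : WithBot mo.syn) →
      SRedToZero m mo F B (spair m F α β))
    (hbasis : ∀ i : Fin n, sig mo (eV i : Fin n → MvPolynomial σ K) < (mo.toSyn T : WithBot mo.syn) →
      SRedToZero m mo F B (eV i)) :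
    SigGBUpTo m mo F B (mo.toSyn T : WithBot mo.syn) :=
  sig_buchberger_criterion_general m mo F B T hpairs hbasis

end GB
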